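/- Let α ∈ (0,1) be irrational and define T : 𝕋² → 𝕋² by T(x,y) = (x + α, x + y) (the affine map with matrix rows (1,0),(1,1) and translation (α,0)). Then Tⁿ(x,y) = (x + nα, n(n−1)α/2 + nx + y) for all n ≥ 1, and with f(x,y) = e^{2πiy} and the starting point (α/2, 0) one has, for every N ≥ 1, (1/N)·Σ_{n=1}^N e^{−πin²α} f(Tⁿ(α/2, 0)) = 1. Consequently the oscillating sequence c_n = e^{−πin²α} is not linearly disjoint from the flow (𝕋², T). -/

import Mathlib

open Filter Finset Topology
open scoped Classical

/-- A sequence of complex numbers is *oscillating* if its twisted Cesàro means tend to zero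
for every frequency `t ∈ [0,1)`. -/
def Oscillating (c : ℕ → ℂ) : Prop :=
  ∀ t : ℝ, 0 ≤ t → t < 1 →
    Filter.Tendsto
      (fun N : ℕ => (N : ℂ)⁻¹ * ∑ n ∈ Finset.Icc 1 N,
        c n * Complex.exp (-(2 * Real.pi * Complex.I * n * t)))
      Filter.atTop (nhds 0)

/-- The growth condition: `∑_{n=1}^N |c n|^λ = O(N)` for some `λ > 1`. -/
def GrowthCondition (c : ℕ → ℂ) : Prop :=
  ∃ lam : ℝ, 1 < lam ∧ ∃ C : ℝ, ∀ N : ℕ,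
    ∑ n ∈ Finset.Icc 1 N, ‖c n‖ ^ lam ≤ C * N

/-- Upper density of a set of natural numbers. -/
noncomputable def upperDensity (E : Set ℕ) : ℝ :=
  Filter.limsup (fun N : ℕ => (((Finset.Icc 1 N).filter (fun n => n ∈ E)).card : ℝ) / N)
    Filter.atTop

/-- A flow is mean-L-stable (MLS). -/
def IsMLS {X : Type*} [PseudoMetricSpace X] (T : X → X) : Prop :=
  ∀ ε : ℝ, 0 < ε → ∃ δ : ℝ, 0 < δ ∧ ∀ x y : X, dist x y < δ →
    upperDensity {n : ℕ | ε ≤ dist (T^[n] x) (T^[n] y)} < ε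

/-- The restriction of a flow to a subset `K` is mean-L-stable. -/
def IsMLSOn {X : Type*} [PseudoMetricSpace X] (T : X → X) (K : Set X) : Prop :=
  ∀ ε : ℝ, 0 < ε → ∃ δ : ℝ, 0 < δ ∧ ∀ x ∈ K, ∀ y ∈ K, dist x y < δ →
    upperDensity {n : ℕ | ε ≤ dist (T^[n] x) (T^[n] y)} < ε

/-- A minimal subset of a flow: nonempty, closed, invariant, and every forward orbit is dense. -/
def MinimalSubset {X : Type*} [TopologicalSpace X] (T : X → X) (K : Set X) : Prop :=
  K.Nonempty ∧ IsClosed K ∧ Set.MapsTo T K K ∧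
    ∀ x ∈ K, K ⊆ closure (Set.range fun n : ℕ => T^[n] x)

/-- A flow is minimally mean-L-stable (MMLS) if its restriction to every minimal subset is MLS. -/
def IsMMLS {X : Type*} [PseudoMetricSpace X] (T : X → X) : Prop :=
  ∀ K : Set X, MinimalSubset T K → IsMLSOn T K

/-- `x` is mean attracted to `K`. -/
def MeanAttracted {X : Type*} [PseudoMetricSpace X] (T : X → X) (x : X) (K : Set X) : Prop :=
  ∀ ε : ℝ, 0 < ε → ∃ z ∈ K,
    Filter.limsup
      (fun N : ℕ => (N : ℝ)⁻¹ * ∑ n ∈ Finset.Icc 1 N, dist (T^[n] x) (T^[n] z))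
      Filter.atTop < ε

/-- A flow is minimally mean attractable (MMA). -/
def IsMMA {X : Type*} [PseudoMetricSpace X] (T : X → X) : Prop :=
  ∀ x : X, ∃ K : Set X, MinimalSubset T K ∧ MeanAttracted T x K

/-- A sequence is linearly disjoint from a flow. -/
def LinearlyDisjoint {X : Type*} [TopologicalSpace X] (c : ℕ → ℂ) (T : X → X) : Prop :=
  ∀ f : C(X, ℂ), ∀ x : X,
    Filter.Tendsto
      (fun N : ℕ => (N : ℂ)⁻¹ * ∑ n ∈ Finset.Icc 1 N, c n * f (T^[n] x))
      Filter.atTop (nhds 0)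

/-- An equicontinuous flow. -/
def EquicontinuousFlow {X : Type*} [PseudoMetricSpace X] (T : X → X) : Prop :=
  ∀ ε : ℝ, 0 < ε → ∃ δ : ℝ, 0 < δ ∧ ∀ x y : X, dist x y < δ →
    ∀ n : ℕ, dist (T^[n] x) (T^[n] y) < ε



/-- The integer lattice `ℤ²` inside the Euclidean plane, generated by the standard basis. -/
noncomputable def torusLattice : AddSubgroup (EuclideanSpace ℝ (Fin 2)) :=
  AddSubgroup.closure (Set.range fun i : Fin 2 => EuclideanSpace.single i (1 : ℝ))

/-- The 2-torus `𝕋² = ℝ²/ℤ²`, equipped with the quotient (semi)norm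
`‖x‖_{𝕋²} = inf_{n ∈ ℤ²} ‖x - n‖_{ℝ²}`. -/
abbrev Torus2 : Type := EuclideanSpace ℝ (Fin 2) ⧸ torusLattice

/-- The linear action of a `2×2` integer matrix on the Euclidean plane. -/
noncomputable def matAction (A : Matrix (Fin 2) (Fin 2) ℤ) (v : EuclideanSpace ℝ (Fin 2)) :
    EuclideanSpace ℝ (Fin 2) :=
  (WithLp.equiv 2 (Fin 2 → ℝ)).symm
    ((A.map (Int.cast : ℤ → ℝ)).mulVec (WithLp.equiv 2 (Fin 2 → ℝ) v))

/-- `A` is diagonalizable over `ℂ`. -/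
def DiagonalizableOverC (A : Matrix (Fin 2) (Fin 2) ℤ) : Prop :=
  ∃ P : Matrix (Fin 2) (Fin 2) ℂ, IsUnit P.det ∧
    (P⁻¹ * A.map (Int.cast : ℤ → ℂ) * P).IsDiag

/-- All (complex) eigenvalues of `A` have modulus `1`. -/
def EigenvaluesModulusOne (A : Matrix (Fin 2) (Fin 2) ℤ) : Prop :=
  ∀ μ ∈ (A.map (Int.cast : ℤ → ℂ)).charpoly.roots, ‖μ‖ = 1

/-- The point of the Euclidean plane with coordinates `(a, b)`. -/
noncomputable def planeVec (a b : ℝ) : EuclideanSpace ℝ (Fin 2) :=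
  (WithLp.equiv 2 (Fin 2 → ℝ)).symm ![a, b]

/-- The affine map `(x, y) ↦ (x + α, x + y)` on the plane (matrix rows `(1,0),(1,1)`,
translation `(α,0)`). -/
noncomputable def skewAction (α : ℝ) (v : EuclideanSpace ℝ (Fin 2)) :
    EuclideanSpace ℝ (Fin 2) :=
  planeVec (WithLp.equiv 2 (Fin 2 → ℝ) v 0 + α)
    (WithLp.equiv 2 (Fin 2 → ℝ) v 0 + WithLp.equiv 2 (Fin 2 → ℝ) v 1)

/-! Van der Corput: replacing `∑_{n<N} u n` by `H⁻¹ ∑_{n<N} ∑_{h<H} u (n + h)` costs at most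
`2H`, and by Cauchy–Schwarz the square of the double sum is at most
`N (H N + ∑_{p ≠ q < H} ‖∑_{n<N} u (n + p) conj (u (n + q))‖)`. So once the correlations are
`o(N)`, the averages of `u` are eventually below `ε` (take `H > 8/ε²`). For
`u n = e(-n²α/2 - nt)` the correlations are geometric sums of ratio `e(-(p - q)α) ≠ 1`, hence
bounded, so `(e(-n²α/2))` is oscillating. Along the orbit of `(α/2, 0)` the second coordinate
is `n²α/2`, so `f (Tⁿ (α/2, 0))` cancels the weight exactly and the weighted averages are
identically `1`. -/

section VanDerCorput

open ComplexConjugate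

variable (u : ℕ → ℂ)

noncomputable def correlation (N p q : ℕ) : ℂ := ∑ n ∈ range N, u (n + p) * conj (u (n + q))

variable {u}

lemma norm_sum_range_add_sub_sum_range_le (hu : ∀ n, ‖u n‖ ≤ 1) (N h : ℕ) :
    ‖∑ n ∈ range N, u (n + h) - ∑ n ∈ range N, u n‖ ≤ 2 * h := by
  have hsplit := (sum_range_add u h N).symm.trans (add_comm h N ▸ sum_range_add u N h)
  have hdiff : ∑ n ∈ range N, u (n + h) - ∑ n ∈ range N, u n
      = ∑ n ∈ range h, u (N + n) - ∑ n ∈ range h, u n := by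
    simp only [add_comm _ h]
    linear_combination hsplit
  rw [hdiff, two_mul]
  refine (norm_sub_le _ _).trans (add_le_add ?_ ?_) <;>
    simpa using norm_sum_le_of_le (range h) (fun n _ => hu _)

lemma norm_mul_sum_sub_sum_window_le (hu : ∀ n, ‖u n‖ ≤ 1) (N H : ℕ) :
    ‖(H : ℂ) * ∑ n ∈ range N, u n - ∑ n ∈ range N, ∑ h ∈ range H, u (n + h)‖ ≤ 2 * H ^ 2 := by
  have hrw : (H : ℂ) * ∑ n ∈ range N, u n - ∑ n ∈ range N, ∑ h ∈ range H, u (n + h)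
      = ∑ h ∈ range H, -(∑ n ∈ range N, u (n + h) - ∑ n ∈ range N, u n) := by
    rw [sum_comm, sum_neg_distrib, sum_sub_distrib, sum_const, card_range, nsmul_eq_mul]
    ring
  rw [hrw]
  calc _ ≤ ∑ h ∈ range H, (2 * H : ℝ) := norm_sum_le_of_le _ fun h hh => by
          rw [norm_neg]
          exact (norm_sum_range_add_sub_sum_range_le hu N h).trans
            (by gcongr; exact (mem_range.mp hh).le)
    _ = 2 * H ^ 2 := by simp; ring

lemma norm_sq_sum_eq_re_sum_sum_mul_conj {ι : Type*} (s : Finset ι) (x : ι → ℂ) :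
    ‖∑ i ∈ s, x i‖ ^ 2 = (∑ i ∈ s, ∑ j ∈ s, x i * conj (x j)).re := by
  rw [← sum_mul_sum, ← map_sum, Complex.mul_conj', ← Complex.ofReal_pow, Complex.ofReal_re]

lemma sum_norm_sq_window_le (hu : ∀ n, ‖u n‖ ≤ 1) (N H : ℕ) :
    ∑ n ∈ range N, ‖∑ h ∈ range H, u (n + h)‖ ^ 2
      ≤ H * N + ∑ p ∈ range H, ∑ q ∈ (range H).erase p, ‖correlation u N p q‖ := by
  have hdiag (p : ℕ) : (correlation u N p p).re ≤ N := by
    rw [correlation, Complex.re_sum]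
    calc _ ≤ ∑ n ∈ range N, (1 : ℝ) := sum_le_sum fun n _ => by
            rw [Complex.mul_conj', ← Complex.ofReal_pow, Complex.ofReal_re]
            exact pow_le_one₀ (norm_nonneg _) (hu _)
      _ = N := by simp
  calc ∑ n ∈ range N, ‖∑ h ∈ range H, u (n + h)‖ ^ 2
      = ∑ p ∈ range H,
          (correlation u N p p + ∑ q ∈ (range H).erase p, correlation u N p q).re := by
        simp_rw [norm_sq_sum_eq_re_sum_sum_mul_conj, ← Complex.re_sum, correlation]
        rw [sum_comm]
        congr 1
        refine sum_congr rfl fun p hp => ?_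
        rw [sum_comm, add_sum_erase _ (fun q => ∑ n ∈ range N, u (n + p) * conj (u (n + q))) hp]
    _ ≤ ∑ p ∈ range H, (N + ∑ q ∈ (range H).erase p, ‖correlation u N p q‖) := by
        refine sum_le_sum fun p _ => ?_
        rw [Complex.add_re, Complex.re_sum]
        exact add_le_add (hdiag p) (sum_le_sum fun q _ => Complex.re_le_norm _)
    _ = _ := by simp [sum_add_distrib]

lemma norm_sq_sum_window_le (hu : ∀ n, ‖u n‖ ≤ 1) (N H : ℕ) :
    ‖∑ n ∈ range N, ∑ h ∈ range H, u (n + h)‖ ^ 2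
      ≤ N * (H * N + ∑ p ∈ range H, ∑ q ∈ (range H).erase p, ‖correlation u N p q‖) := by
  calc _ ≤ (∑ n ∈ range N, ‖∑ h ∈ range H, u (n + h)‖) ^ 2 := by
          gcongr; exact norm_sum_le _ _
    _ ≤ N * ∑ n ∈ range N, ‖∑ h ∈ range H, u (n + h)‖ ^ 2 := by
          simpa using sq_sum_le_card_mul_sum_sq (s := range N)
    _ ≤ _ := by gcongr; exact sum_norm_sq_window_le hu N H

lemma norm_sum_range_lt_of_correlation_le (hu : ∀ n, ‖u n‖ ≤ 1) {N H : ℕ} {ε : ℝ} (hε : 0 < ε)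
    (hH : 8 ≤ ε ^ 2 * H)
    (hcorr : ∑ p ∈ range H, ∑ q ∈ (range H).erase p, ‖correlation u N p q‖ ≤ H * N)
    (hN : 4 * H < ε * N) :
    ‖∑ n ∈ range N, u n‖ < ε * N := by
  set A := ∑ n ∈ range N, ∑ h ∈ range H, u (n + h)
  have hHpos : (0 : ℝ) < H := Nat.cast_pos.2 (Nat.pos_of_ne_zero (by rintro rfl; norm_num at hH))
  have hA : ‖A‖ ≤ ε * H * N / 2 := by
    refine (sq_le_sq₀ (norm_nonneg _) (by positivity)).mp ?_
    calc ‖A‖ ^ 2 ≤ N * (H * N + H * N) := (norm_sq_sum_window_le hu N H).trans (by gcongr)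
      _ ≤ (ε * H * N / 2) ^ 2 := by nlinarith [sq_nonneg (N : ℝ)]
  have hS : H * ‖∑ n ∈ range N, u n‖ < H * (ε * N) := by
    calc H * ‖∑ n ∈ range N, u n‖ = ‖(H : ℂ) * ∑ n ∈ range N, u n‖ := by simp
      _ ≤ ‖A‖ + 2 * H ^ 2 := (norm_le_norm_add_norm_sub' _ A).trans
            (by gcongr; exact norm_mul_sum_sub_sum_window_le hu N H)
      _ < H * (ε * N) := by nlinarith
  exact lt_of_mul_lt_mul_left hS hHpos.le

theorem tendsto_average_of_tendsto_correlation (hu : ∀ n, ‖u n‖ ≤ 1)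
    (hcorr : ∀ p q, p ≠ q → Tendsto (fun N : ℕ => ‖correlation u N p q‖ / N) atTop (𝓝 0)) :
    Tendsto (fun N : ℕ => (N : ℂ)⁻¹ * ∑ n ∈ range N, u n) atTop (𝓝 0) := by
  rw [Metric.tendsto_nhds]
  intro ε hε
  obtain ⟨H, hH⟩ := exists_nat_gt (8 / ε ^ 2)
  have hHpos : (0 : ℝ) < H := lt_trans (by positivity) hH
  have hK : Tendsto (fun N : ℕ =>
      (∑ p ∈ range H, ∑ q ∈ (range H).erase p, ‖correlation u N p q‖) / N) atTop (𝓝 0) := by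
    simp_rw [sum_div]
    simpa using tendsto_finsetSum _ fun p _ =>
      tendsto_finsetSum _ fun q hq => hcorr p q (ne_of_mem_erase hq).symm
  filter_upwards [hK.eventually (gt_mem_nhds hHpos),
    tendsto_natCast_atTop_atTop.eventually_gt_atTop (4 * H / ε), eventually_gt_atTop 0]
    with N hKN hN hN0
  have hNpos : (0 : ℝ) < N := by exact_mod_cast hN0
  rw [dist_zero_right, norm_mul, norm_inv, Complex.norm_natCast, inv_mul_lt_iff₀ hNpos,
    mul_comm]
  refine norm_sum_range_lt_of_correlation_le (H := H) hu hε ?_ ?_ ?_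
  · rw [div_lt_iff₀ (by positivity)] at hH; linarith
  · rw [div_lt_iff₀ hNpos] at hKN; linarith
  · rw [div_lt_iff₀ hε] at hN; linarith

lemma correlation_comp_add_one (u : ℕ → ℂ) (N p q : ℕ) :
    correlation (fun n => u (n + 1)) N p q = correlation u N (p + 1) (q + 1) := by
  simp only [correlation, add_assoc]

end VanDerCorput

section QuadraticPhase

open Complex ComplexConjugate
open scoped Real

lemma norm_geom_sum_le {w : ℂ} (hw : ‖w‖ = 1) (hw1 : w ≠ 1) (N : ℕ) :
    ‖∑ n ∈ range N, w ^ n‖ ≤ 2 / ‖w - 1‖ := by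
  rw [geom_sum_eq hw1, norm_div]
  gcongr
  calc ‖w ^ N - 1‖ ≤ ‖w ^ N‖ + ‖(1 : ℂ)‖ := norm_sub_le _ _
    _ = 2 := by rw [norm_pow, hw]; norm_num

lemma Complex.exp_two_pi_mul_I_mul_ne_one {x : ℝ} (hx : Irrational x) :
    exp (2 * π * I * x) ≠ 1 := by
  rw [Ne, exp_eq_one_iff]
  rintro ⟨n, hn⟩
  refine hx.ne_int n (ofReal_injective ?_)
  have h2piI : (2 * π * I : ℂ) ≠ 0 := by simp [Real.pi_ne_zero]
  apply mul_left_cancel₀ h2piI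
  rw [hn]; push_cast; ring

noncomputable def quadPhase (a b : ℝ) (n : ℕ) : ℂ := exp (2 * π * I * (a * n ^ 2 + b * n))

lemma norm_quadPhase (a b : ℝ) (n : ℕ) : ‖quadPhase a b n‖ = 1 := by
  rw [quadPhase]
  convert norm_exp_ofReal_mul_I (2 * π * (a * n ^ 2 + b * n)) using 3
  push_cast; ring

lemma quadPhase_add_mul_conj (a b : ℝ) (n p q : ℕ) :
    quadPhase a b (n + p) * conj (quadPhase a b (n + q)) =
      quadPhase a b p * conj (quadPhase a b q) *
        exp (2 * π * I * (2 * a * ((p : ℝ) - q) : ℝ)) ^ n := by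
  simp only [quadPhase, ← exp_conj, ← exp_nat_mul, ← exp_add, map_mul, map_add, conj_ofReal,
    conj_I, map_pow, map_natCast, map_ofNat]
  congr 1
  push_cast
  ring

lemma tendsto_correlation_quadPhase_div {a : ℝ} (ha : Irrational (2 * a)) (b : ℝ) {p q : ℕ}
    (hpq : p ≠ q) :
    Tendsto (fun N : ℕ => ‖correlation (quadPhase a b) N p q‖ / N) atTop (𝓝 0) := by
  set w := exp (2 * π * I * (2 * a * ((p : ℝ) - q) : ℝ))
  have hw : ‖w‖ = 1 := by
    convert norm_exp_ofReal_mul_I (2 * π * (2 * a * ((p : ℝ) - q))) using 3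
    push_cast; ring
  have hw1 : w ≠ 1 := by
    refine exp_two_pi_mul_I_mul_ne_one ?_
    simpa using ha.mul_intCast (m := (p : ℤ) - q) (sub_ne_zero.2 (by exact_mod_cast hpq))
  have hbound (N : ℕ) : ‖correlation (quadPhase a b) N p q‖ ≤ 2 / ‖w - 1‖ := by
    simp only [correlation, quadPhase_add_mul_conj, ← mul_sum, norm_mul, RCLike.norm_conj,
      norm_quadPhase, one_mul]
    exact norm_geom_sum_le hw hw1 N
  exact squeeze_zero (fun N => by positivity) (fun N => by gcongr; exact hbound N)
    (tendsto_const_div_atTop_nhds_zero_nat _)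

lemma sum_Icc_one_eq_sum_range (g : ℕ → ℂ) (N : ℕ) :
    ∑ n ∈ Icc 1 N, g n = ∑ n ∈ range N, g (n + 1) := by
  rw [range_eq_Ico, sum_Ico_add', zero_add, Ico_add_one_right_eq_Icc]

theorem tendsto_average_quadPhase {a : ℝ} (ha : Irrational (2 * a)) (b : ℝ) :
    Tendsto (fun N : ℕ => (N : ℂ)⁻¹ * ∑ n ∈ Icc 1 N, quadPhase a b n) atTop (𝓝 0) := by
  simp_rw [sum_Icc_one_eq_sum_range]
  refine tendsto_average_of_tendsto_correlation (fun n => (norm_quadPhase a b _).le)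
    fun p q hpq => ?_
  simpa only [correlation_comp_add_one] using
    tendsto_correlation_quadPhase_div ha b (by simpa using hpq)

theorem oscillating_exp_neg_pi_I_sq_mul {α : ℝ} (hα : Irrational α) :
    Oscillating (fun n : ℕ => exp (-(π * I * (n : ℂ) ^ 2 * α))) := by
  intro t _ _
  have hterm (n : ℕ) :
      exp (-(π * I * (n : ℂ) ^ 2 * α)) * exp (-(2 * π * I * n * t)) =
        quadPhase (-α / 2) (-t) n := by
    rw [quadPhase, ← exp_add]
    congr 1
    push_cast
    ring
  have h2a : Irrational (2 * (-α / 2)) := by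
    convert hα.neg using 1
    ring
  simpa only [hterm] using tendsto_average_quadPhase h2a (-t)

end QuadraticPhase

lemma not_linearlyDisjoint_of_average_eq_one {X : Type*} [TopologicalSpace X] {c : ℕ → ℂ}
    {T : X → X} (f : C(X, ℂ)) (x : X)
    (h : ∀ N : ℕ, 1 ≤ N → (N : ℂ)⁻¹ * ∑ n ∈ Icc 1 N, c n * f (T^[n] x) = 1) :
    ¬ LinearlyDisjoint c T := by
  intro hLD
  have hone : Tendsto (fun _ : ℕ => (1 : ℂ)) atTop (𝓝 0) :=
    (hLD f x).congr' (eventually_atTop.2 ⟨1, h⟩)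
  exact one_ne_zero (tendsto_nhds_unique tendsto_const_nhds hone)

section SkewProduct

open QuotientAddGroup

lemma planeVec_apply (a b : ℝ) : WithLp.equiv 2 (Fin 2 → ℝ) (planeVec a b) = ![a, b] :=
  Equiv.apply_symm_apply _ _

lemma skewAction_planeVec (α x y : ℝ) : skewAction α (planeVec x y) = planeVec (x + α) (x + y) := by
  rw [skewAction, planeVec_apply]
  rfl

lemma iterate_mk_planeVec {α : ℝ} {T : Torus2 → Torus2}
    (hT : ∀ v, T (mk v) = mk (skewAction α v)) (x y : ℝ) (n : ℕ) :
    T^[n] (mk (planeVec x y)) =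
      mk (planeVec (x + n * α) ((n : ℝ) * ((n : ℝ) - 1) * α / 2 + n * x + y)) := by
  induction n with
  | zero => simp
  | succ n ih =>
    rw [Function.iterate_succ_apply', ih, hT, skewAction_planeVec]
    congr 2 <;> push_cast <;> ring

lemma average_exp_neg_pi_I_sq_mul_orbit_eq_one {α : ℝ} {T : Torus2 → Torus2} {f : Torus2 → ℂ}
    (hT : ∀ v, T (mk v) = mk (skewAction α v))
    (hf : ∀ v, f (mk v) = Complex.exp (2 * Real.pi * Complex.I * (WithLp.equiv 2 (Fin 2 → ℝ) v 1)))
    {N : ℕ} (hN : 1 ≤ N) :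
    (N : ℂ)⁻¹ * ∑ n ∈ Icc 1 N,
      Complex.exp (-(Real.pi * Complex.I * (n : ℂ) ^ 2 * α)) *
        f (T^[n] (mk (planeVec (α / 2) 0))) = 1 := by
  have hterm (n : ℕ) : Complex.exp (-(Real.pi * Complex.I * (n : ℂ) ^ 2 * α)) *
      f (T^[n] (mk (planeVec (α / 2) 0))) = 1 := by
    rw [iterate_mk_planeVec hT, hf, planeVec_apply, ← Complex.exp_add, ← Complex.exp_zero]
    congr 1
    simp only [Matrix.cons_val_one, Matrix.cons_val_zero]
    push_cast
    ring
  have hN0 : (N : ℂ) ≠ 0 := by exact_mod_cast (Nat.one_le_iff_ne_zero.mp hN)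
  simp [sum_congr rfl fun n _ => hterm n, hN0]

end SkewProduct

theorem skew_product_not_linearly_disjoint_general
    (α : ℝ) (hirr : Irrational α)
    (T : Torus2 → Torus2)
    (hT : ∀ v : EuclideanSpace ℝ (Fin 2),
      T (QuotientAddGroup.mk v) = QuotientAddGroup.mk (skewAction α v))
    (f : Torus2 → ℂ) (hfcont : Continuous f)
    (hf : ∀ v : EuclideanSpace ℝ (Fin 2),
      f (QuotientAddGroup.mk v) =
        Complex.exp (2 * Real.pi * Complex.I * (WithLp.equiv 2 (Fin 2 → ℝ) v 1))) :
    (∀ x y : ℝ, ∀ n : ℕ, 1 ≤ n →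
      T^[n] (QuotientAddGroup.mk (planeVec x y)) =
        QuotientAddGroup.mk
          (planeVec (x + n * α) ((n : ℝ) * ((n : ℝ) - 1) * α / 2 + n * x + y))) ∧
    (∀ N : ℕ, 1 ≤ N →
      (N : ℂ)⁻¹ * ∑ n ∈ Finset.Icc 1 N,
        Complex.exp (-(Real.pi * Complex.I * (n : ℂ) ^ 2 * α)) *
          f (T^[n] (QuotientAddGroup.mk (planeVec (α / 2) 0))) = 1) ∧
    Oscillating (fun n : ℕ => Complex.exp (-(Real.pi * Complex.I * (n : ℂ) ^ 2 * α))) ∧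
    ¬ LinearlyDisjoint
        (fun n : ℕ => Complex.exp (-(Real.pi * Complex.I * (n : ℂ) ^ 2 * α))) T := by
  have haverage := fun N (hN : 1 ≤ N) => average_exp_neg_pi_I_sq_mul_orbit_eq_one hT hf hN
  exact ⟨fun x y n _ => iterate_mk_planeVec hT x y n, haverage,
    oscillating_exp_neg_pi_I_sq_mul hirr,
    not_linearlyDisjoint_of_average_eq_one ⟨f, hfcont⟩ _ haverage⟩

/-- For irrational `α ∈ (0,1)` and the affine map
`T(x,y) = (x + α, x + y)` on `𝕋²`: `Tⁿ(x,y) = (x + nα, n(n-1)α/2 + nx + y)`; with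
`f(x,y) = e^{2πiy}` and starting point `(α/2, 0)` the weighted averages of
`c_n = e^{-πin²α}` are constantly `1`; hence the oscillating sequence `(c_n)` is **not**
linearly disjoint from the flow `(𝕋², T)`. -/
theorem skew_product_not_linearly_disjoint
    (α : ℝ) (hα0 : 0 < α) (hα1 : α < 1) (hirr : Irrational α)
    (T : Torus2 → Torus2) (hTcont : Continuous T)
    (hT : ∀ v : EuclideanSpace ℝ (Fin 2),
      T (QuotientAddGroup.mk v) = QuotientAddGroup.mk (skewAction α v))
    (f : Torus2 → ℂ) (hfcont : Continuous f)
    (hf : ∀ v : EuclideanSpace ℝ (Fin 2),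
      f (QuotientAddGroup.mk v) =
        Complex.exp (2 * Real.pi * Complex.I * (WithLp.equiv 2 (Fin 2 → ℝ) v 1))) :
    (∀ x y : ℝ, ∀ n : ℕ, 1 ≤ n →
      T^[n] (QuotientAddGroup.mk (planeVec x y)) =
        QuotientAddGroup.mk
          (planeVec (x + n * α) ((n : ℝ) * ((n : ℝ) - 1) * α / 2 + n * x + y))) ∧
    (∀ N : ℕ, 1 ≤ N →
      (N : ℂ)⁻¹ * ∑ n ∈ Finset.Icc 1 N,
        Complex.exp (-(Real.pi * Complex.I * (n : ℂ) ^ 2 * α)) *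
          f (T^[n] (QuotientAddGroup.mk (planeVec (α / 2) 0))) = 1) ∧
    Oscillating (fun n : ℕ => Complex.exp (-(Real.pi * Complex.I * (n : ℂ) ^ 2 * α))) ∧
    ¬ LinearlyDisjoint
        (fun n : ℕ => Complex.exp (-(Real.pi * Complex.I * (n : ℂ) ^ 2 * α))) T :=
  skew_product_not_linearly_disjoint_general α hirr T hT f hfcont hf
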